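/- Let k ≥ 2. If there is a normal natural deduction proof of φ_k in M→ whose last rule discharges fewer than 2^k assumption occurrences of ξ_k, then there is a normal natural deduction proof of φ_{k-1} whose last rule discharges fewer than 2^{k-1} assumption occurrences of ξ_{k-1}. -/

import Mathlib

/-- Formulas of purely implicational logic, built from atoms (numbered by `ℕ`)
by the single connective `→` (`impl`). -/
inductive Fm : Type
  | atom : ℕ → Fm
  | impl : Fm → Fm → Fm
deriving DecidableEq

/-- χ[X,Y] = (((X → Y) → X) → X) → Y. -/
def chi (X Y : Fm) : Fm := (((X.impl Y).impl X).impl X).impl Y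

/-- The atom `Fm.atom 0` is C, and `Fm.atom k` is D_k for k ≥ 1.
ξ₁ = χ[D₁, C] and ξ_{i+1} = χ[D_{i+1}, ξ_i]  (the value at 0 is irrelevant). -/
def xi : ℕ → Fm
  | 0 => chi (.atom 1) (.atom 0)
  | 1 => chi (.atom 1) (.atom 0)
  | n + 2 => chi (.atom (n + 2)) (xi (n + 1))

/-- φ_n = ξ_n → C. -/
def phi (n : ℕ) : Fm := (xi n).impl (.atom 0)

/-- Natural deduction derivations for M→, indexed by the multiset of open
assumption occurrences and the conclusion.  `assume a` is a one-occurrence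
assumption of `a`; `intro n` is →-introduction discharging exactly `n`
occurrences of the assumption `a`; `elim` is →-elimination whose second
premise (the implication) is the major premise. -/
inductive Deriv : Multiset Fm → Fm → Type
  | assume (a : Fm) : Deriv {a} a
  | intro {Γ : Multiset Fm} {a b : Fm} (n : ℕ)
      (d : Deriv (Γ + Multiset.replicate n a) b) : Deriv Γ (a.impl b)
  | elim {Γ Δ : Multiset Fm} {a b : Fm}
      (minor : Deriv Γ a) (major : Deriv Δ (a.impl b)) : Deriv (Γ + Δ) b

/-- The last rule of the derivation is an →-introduction. -/
def Deriv.isIntro : ∀ {Γ b}, Deriv Γ b → Prop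
  | _, _, .intro _ _ => True
  | _, _, _ => False

/-- A derivation is normal if no formula occurrence is both the conclusion of
an →-introduction and the major premise of an →-elimination. -/
def Deriv.normal : ∀ {Γ b}, Deriv Γ b → Prop
  | _, _, .assume _ => True
  | _, _, .intro _ d => d.normal
  | _, _, .elim minor major => minor.normal ∧ major.normal ∧ ¬ major.isIntro

/-! Write `ξ_j = χ[D_j, t_j]`, so that `t_k = ξ_{k-1}`. In a normal proof every assumption `ξ_k`
heads a chain of eliminations whose first minor premise proves the Peirce formula
`((D_k → t_k) → D_k) → D_k` and whose first conclusion is `t_k`. If that minor premise uses `ξ_k`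
as well, the elimination is replaced by one assumption `ξ_{k-1}`, so at least two assumptions `ξ_k`
become one. Otherwise it is derived from assumptions of lower level only, and a two-world Kripke
countermodel to Peirce's law shows that these contain `D_l → t_l` together with `D_l` or
`(D_l → t_l) → D_l` for some `l < k`; from them `t_l` is derived, then `t_k` by vacuous
introductions, with no `ξ_k` at all. A vacuous introduction that lands in major position is cut
away together with its minor premise, so the result stays normal. -/

namespace Fm

def Forces {W : Type*} [Preorder W] (V : ℕ → W → Prop) : Fm → W → Prop
  | atom i, w => V i w
  | impl a b, w => ∀ v, w ≤ v → a.Forces V v → b.Forces V v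

theorem Forces.mono {W : Type*} [Preorder W] {V : ℕ → W → Prop} (hV : ∀ i, Monotone (V i)) :
    ∀ {a : Fm} {w v : W}, w ≤ v → a.Forces V w → a.Forces V v
  | atom i, _, _, hwv, h => hV i hwv h
  | impl _ _, _, _, hwv, h => fun u hvu => h u (hwv.trans hvu)

inductive IsTail (c : Fm) : Fm → Prop
  | refl : IsTail c c
  | impl {a b : Fm} : IsTail c b → IsTail c (a.impl b)

@[simp] theorem isTail_atom {c : Fm} {i : ℕ} : c.IsTail (atom i) ↔ c = atom i :=
  ⟨fun h => by cases h; rfl, fun h => h ▸ .refl⟩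

@[simp] theorem isTail_impl {c a b : Fm} : c.IsTail (a.impl b) ↔ c = a.impl b ∨ c.IsTail b :=
  ⟨fun h => by cases h with | refl => exact .inl rfl | impl h => exact .inr h,
    fun h => h.elim (fun h => h ▸ .refl) .impl⟩

theorem IsTail.of_impl {a b g : Fm} (h : (a.impl b).IsTail g) : b.IsTail g := by
  induction h with
  | refl => exact .impl .refl
  | impl _ ih => exact .impl ih

end Fm

namespace Deriv

theorem forces {Γ : Multiset Fm} {c : Fm} (d : Deriv Γ c) {W : Type*} [Preorder W]
    {V : ℕ → W → Prop} (hV : ∀ i, Monotone (V i)) :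
    ∀ {w : W}, (∀ x ∈ Γ, x.Forces V w) → c.Forces V w := by
  induction d with
  | assume a => exact fun hΓ => hΓ a (Multiset.mem_singleton_self a)
  | intro n d ih =>
    intro w hΓ v hwv ha
    refine ih fun x hx => ?_
    rcases Multiset.mem_add.mp hx with hx | hx
    · exact Fm.Forces.mono hV hwv (hΓ x hx)
    · exact Multiset.eq_of_mem_replicate hx ▸ ha
  | elim minor major ihm ihM =>
    intro w hΓ
    exact ihM (fun x hx => hΓ x (Multiset.mem_add.mpr (.inr hx))) w le_rfl
      (ihm fun x hx => hΓ x (Multiset.mem_add.mpr (.inl hx)))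

theorem exists_isTail {Γ : Multiset Fm} {c : Fm} (d : Deriv Γ c) (hd : d.normal)
    (hi : ¬ d.isIntro) : ∃ g ∈ Γ, c.IsTail g := by
  induction d with
  | assume a => exact ⟨a, Multiset.mem_singleton_self a, .refl⟩
  | intro => exact absurd trivial hi
  | elim _ _ _ ihM =>
    obtain ⟨g, hg, hcg⟩ := ihM hd.2.1 hd.2.2
    exact ⟨g, Multiset.mem_add.mpr (.inr hg), hcg.of_impl⟩

def IntrosVacuous : ∀ {Γ b}, Deriv Γ b → Prop
  | _, _, .intro n d => n = 0 ∧ d.IntrosVacuous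
  | _, _, _ => True

theorem exists_normal_intro {Δ : Multiset Fm} {b : Fm} (d : Deriv Δ b) (hd : d.normal)
    (a : Fm) : ∃ d' : Deriv (Δ.filter (· ≠ a)) (a.impl b), d'.normal := by
  have hΔ : Δ.filter (· ≠ a) + Multiset.replicate (Δ.count a) a = Δ := by
    conv_rhs => rw [← Multiset.filter_add_not (· ≠ a) Δ]
    simp only [ne_eq, not_not, Multiset.filter_eq']
  obtain ⟨d', hd'⟩ : ∃ d' : Deriv (Δ.filter (· ≠ a) + Multiset.replicate (Δ.count a) a) b,
      d'.normal := by rw [hΔ]; exact ⟨d, hd⟩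
  exact ⟨.intro _ d', hd'⟩

theorem exists_normal_elim {Δ₁ Δ₂ : Multiset Fm} {a b : Fm} (minor : Deriv Δ₁ a)
    (major : Deriv Δ₂ (a.impl b)) (hm : minor.normal) (hM : major.normal)
    (hv : major.IntrosVacuous) :
    ∃ Δ ≤ Δ₁ + Δ₂, ∃ d : Deriv Δ b, d.normal ∧ d.IntrosVacuous := by
  cases major with
  | assume => exact ⟨_, le_rfl, .elim minor (.assume _), ⟨hm, trivial, id⟩, trivial⟩
  | intro n body =>
    obtain ⟨rfl, hv⟩ := hv
    refine ⟨Δ₂, Multiset.le_add_left _ _, ?_⟩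
    rw [← add_zero Δ₂, ← Multiset.replicate_zero a]
    exact ⟨body, hM, hv⟩
  | elim m M => exact ⟨_, le_rfl, .elim minor (.elim m M), ⟨hm, hM, id⟩, trivial⟩

end Deriv

/-- `ξ_j = χ[D_j, xiTarget j]` for `j ≥ 1`. -/
def xiTarget : ℕ → Fm
  | 0 => .atom 0
  | 1 => .atom 0
  | j + 2 => xi (j + 1)

def dImp (j : ℕ) : Fm := (Fm.atom j).impl (xiTarget j)

def peirceHyp (j : ℕ) : Fm := (dImp j).impl (.atom j)

def xiAnte (j : ℕ) : Fm := (peirceHyp j).impl (.atom j)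

theorem xi_eq {j : ℕ} (hj : 1 ≤ j) : xi j = (xiAnte j).impl (xiTarget j) := by
  obtain _ | _ | j := j
  · omega
  · rfl
  · rfl

theorem xiTarget_succ {j : ℕ} (hj : 1 ≤ j) : xiTarget (j + 1) = xi j := by
  obtain _ | j := j
  · omega
  · rfl

def LowHyp (k : ℕ) (x : Fm) : Prop :=
  ∃ j, 1 ≤ j ∧ j < k ∧ (x = .atom j ∨ x = dImp j ∨ x = peirceHyp j ∨ x = xiAnte j)

def LowGoal (k : ℕ) (c : Fm) : Prop :=
  c = .atom 0 ∨ LowHyp k c ∨ ∃ j, 1 ≤ j ∧ j < k ∧ c = xi j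

def Admissible (k : ℕ) (x : Fm) : Prop := x = xi k ∨ LowHyp k x

theorem LowHyp.lowGoal {k : ℕ} {x : Fm} (h : LowHyp k x) : LowGoal k x := .inr (.inl h)

theorem LowGoal.ne_xi {k : ℕ} {c : Fm} (hk : 1 ≤ k) (h : LowGoal k c) : c ≠ xi k := by
  rw [xi_eq hk]
  rcases h with rfl | ⟨j, -, -, h⟩ | ⟨j, hj, hjk, rfl⟩
  · simp
  · rcases h with rfl | rfl | rfl | rfl <;> simp [xiAnte, peirceHyp, dImp]
  · rw [xi_eq hj]
    simp [xiAnte, peirceHyp, dImp, hjk.ne]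

theorem LowHyp.ne_xi {k : ℕ} {x : Fm} (hk : 1 ≤ k) (h : LowHyp k x) : x ≠ xi k :=
  h.lowGoal.ne_xi hk

theorem LowHyp.ne_xiTarget {k : ℕ} {x : Fm} (hk : 2 ≤ k) (h : LowHyp k x) :
    x ≠ xiTarget k := by
  obtain ⟨k, rfl⟩ : ∃ i, k = i + 1 := ⟨k - 1, by omega⟩
  rw [xiTarget_succ (by omega), xi_eq (by omega)]
  rcases h with ⟨j, -, -, rfl | rfl | rfl | rfl⟩ <;> simp [xiAnte, peirceHyp, dImp]

theorem lowGoal_of_isTail_xiTarget {k j : ℕ} {c : Fm} (hj : 1 ≤ j) (hjk : j ≤ k)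
    (h : c.IsTail (xiTarget j)) : LowGoal k c := by
  induction j, hj using Nat.le_induction generalizing c with
  | base => exact .inl (Fm.isTail_atom.mp h)
  | succ j hj ih =>
    rw [xiTarget_succ hj, xi_eq hj, Fm.isTail_impl, ← xi_eq hj] at h
    rcases h with rfl | h
    · exact .inr (.inr ⟨j, hj, hjk, rfl⟩)
    · exact ih (by omega) h

theorem lowGoal_xiTarget {k : ℕ} (hk : 1 ≤ k) : LowGoal k (xiTarget k) :=
  lowGoal_of_isTail_xiTarget hk le_rfl .refl

theorem xiTarget_ne_xi {k : ℕ} (hk : 1 ≤ k) : xiTarget k ≠ xi k :=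
  (lowGoal_xiTarget hk).ne_xi hk

theorem LowGoal.of_impl {k : ℕ} {a b : Fm} (h : LowGoal k (a.impl b)) :
    LowHyp k a ∧ LowGoal k b := by
  rcases h with h | ⟨j, hj, hjk, h | h | h | h⟩ | ⟨j, hj, hjk, h⟩
  · cases h
  · cases h
  · cases h
    exact ⟨⟨j, hj, hjk, .inl rfl⟩, lowGoal_of_isTail_xiTarget hj hjk.le .refl⟩
  · cases h
    exact ⟨⟨j, hj, hjk, .inr (.inl rfl)⟩, LowHyp.lowGoal ⟨j, hj, hjk, .inl rfl⟩⟩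
  · cases h
    exact ⟨⟨j, hj, hjk, .inr (.inr (.inl rfl))⟩, LowHyp.lowGoal ⟨j, hj, hjk, .inl rfl⟩⟩
  · rw [xi_eq hj] at h
    cases h
    exact ⟨⟨j, hj, hjk, .inr (.inr (.inr rfl))⟩, lowGoal_of_isTail_xiTarget hj hjk.le .refl⟩

theorem Admissible.eq_xi_or_lowGoal_of_isTail {k : ℕ} {c g : Fm} (hk : 1 ≤ k)
    (hg : Admissible k g) (h : c.IsTail g) : c = xi k ∧ g = xi k ∨ LowGoal k c := by
  suffices c = g ∨ LowGoal k c by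
    rcases this with rfl | h
    · exact hg.imp (fun hg => ⟨hg, hg⟩) LowHyp.lowGoal
    · exact .inr h
  rcases hg with rfl | ⟨j, hj, hjk, rfl | rfl | rfl | rfl⟩
  · rw [xi_eq hk, Fm.isTail_impl] at h
    rw [xi_eq hk]
    exact h.imp_right (lowGoal_of_isTail_xiTarget hk le_rfl)
  · exact .inl (Fm.isTail_atom.mp h)
  · rw [dImp, Fm.isTail_impl] at h
    exact h.imp_right (lowGoal_of_isTail_xiTarget hj hjk.le)
  · simp only [peirceHyp, Fm.isTail_impl, Fm.isTail_atom] at h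
    exact h.imp_right (by rintro rfl; exact LowHyp.lowGoal ⟨j, hj, hjk, .inl rfl⟩)
  · simp only [xiAnte, Fm.isTail_impl, Fm.isTail_atom] at h
    exact h.imp_right (by rintro rfl; exact LowHyp.lowGoal ⟨j, hj, hjk, .inl rfl⟩)

section Countermodel

variable {k : ℕ} {Γ : Multiset Fm}

def peirceCountermodel (k : ℕ) (Γ : Multiset Fm) (i : ℕ) (w : Bool) : Prop :=
  (i = k ∧ w = true) ∨ (1 ≤ i ∧ i < k ∧ dImp i ∉ Γ)

theorem peirceCountermodel_monotone (i : ℕ) : Monotone (peirceCountermodel k Γ i) := by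
  intro w v hwv h
  rcases h with ⟨rfl, rfl⟩ | h
  · exact .inl ⟨rfl, Bool.eq_true_of_true_le hwv⟩
  · exact .inr h

theorem peirceCountermodel_iff {j : ℕ} (hj : 1 ≤ j) (hjk : j < k) (w : Bool) :
    peirceCountermodel k Γ j w ↔ dImp j ∉ Γ :=
  ⟨fun h => h.elim (fun h => absurd h.1 hjk.ne) (·.2.2), fun h => .inr ⟨hj, hjk, h⟩⟩

theorem forces_xiAnte {j : ℕ} (hj : 1 ≤ j) (hjk : j < k) (w : Bool) :
    (xiAnte j).Forces (peirceCountermodel k Γ) w := by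
  by_cases hD : dImp j ∈ Γ
  · have hDj : ∀ v, ¬ peirceCountermodel k Γ j v := fun v h =>
      (peirceCountermodel_iff hj hjk v).mp h hD
    intro v _ hB
    exact absurd (hB v le_rfl fun u _ hu => absurd hu (hDj u)) (hDj v)
  · exact fun v _ _ => (peirceCountermodel_iff hj hjk v).mpr hD

theorem not_forces_xiTarget {j : ℕ} (hj : 1 ≤ j) (hjk : j ≤ k) (w : Bool) :
    ¬ (xiTarget j).Forces (peirceCountermodel k Γ) w := by
  induction j, hj using Nat.le_induction with
  | base =>
    simp only [xiTarget, Fm.Forces, peirceCountermodel]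
    omega
  | succ j hj ih =>
    rw [xiTarget_succ hj, xi_eq hj]
    exact fun h => ih (by omega) (h w le_rfl (forces_xiAnte hj (by omega) w))

theorem not_forces_xiAnte (hk : 1 ≤ k) : ¬ (xiAnte k).Forces (peirceCountermodel k Γ) false := by
  have hD : ∀ v, ¬ (dImp k).Forces (peirceCountermodel k Γ) v := fun v h =>
    not_forces_xiTarget hk le_rfl true (h true (Bool.le_true v) (.inl ⟨rfl, rfl⟩))
  intro h
  rcases h false le_rfl (fun v _ h => absurd h (hD v)) with ⟨-, h⟩ | ⟨-, h, -⟩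
  · cases h
  · exact h.false

theorem forces_of_lowHyp
    (hΓ : ¬ ∃ l, 1 ≤ l ∧ l < k ∧ dImp l ∈ Γ ∧ (Fm.atom l ∈ Γ ∨ peirceHyp l ∈ Γ))
    {x : Fm} (hx : x ∈ Γ) (hlow : LowHyp k x) (w : Bool) :
    x.Forces (peirceCountermodel k Γ) w := by
  obtain ⟨j, hj, hjk, rfl | rfl | rfl | rfl⟩ := hlow
  · exact (peirceCountermodel_iff hj hjk w).mpr fun hD => hΓ ⟨j, hj, hjk, hD, .inl hx⟩
  · exact fun v _ h => absurd ((peirceCountermodel_iff hj hjk v).mp h) (not_not.mpr hx)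
  · exact fun v _ _ => (peirceCountermodel_iff hj hjk v).mpr fun hD => hΓ ⟨j, hj, hjk, hD, .inr hx⟩
  · exact forces_xiAnte hj hjk w

theorem exists_dImp_mem_of_deriv_xiAnte (hk : 1 ≤ k) (hΓ : ∀ x ∈ Γ, LowHyp k x)
    (d : Deriv Γ (xiAnte k)) :
    ∃ l, 1 ≤ l ∧ l < k ∧ dImp l ∈ Γ ∧ (Fm.atom l ∈ Γ ∨ peirceHyp l ∈ Γ) := by
  by_contra hne
  exact not_forces_xiAnte hk <|
    d.forces peirceCountermodel_monotone fun x hx => forces_of_lowHyp hne hx (hΓ x hx) false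

end Countermodel

theorem exists_deriv_xiTarget {Γ : Multiset Fm} {l : ℕ} (hD : dImp l ∈ Γ)
    (h : Fm.atom l ∈ Γ ∨ peirceHyp l ∈ Γ) :
    ∃ Δ : Multiset Fm, (∀ x ∈ Δ, x ∈ Γ) ∧
      ∃ d : Deriv Δ (xiTarget l), d.normal ∧ d.IntrosVacuous := by
  rcases h with hA | hB
  · refine ⟨{Fm.atom l} + {dImp l}, fun x hx => ?_,
      .elim (.assume _) (.assume (dImp l)), ⟨trivial, trivial, id⟩, trivial⟩
    rcases Multiset.mem_add.mp hx with hx | hx <;> rw [Multiset.mem_singleton.mp hx] <;> assumption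
  · refine ⟨{dImp l} + {peirceHyp l} + {dImp l}, fun x hx => ?_,
      .elim (.elim (.assume _) (.assume (peirceHyp l))) (.assume (dImp l)),
      ⟨⟨trivial, trivial, id⟩, trivial, id⟩, trivial⟩
    simp only [Multiset.mem_add, Multiset.mem_singleton] at hx
    rcases hx with (rfl | rfl) | rfl <;> assumption

theorem exists_deriv_xiTarget_of_le {Δ : Multiset Fm} {l k : ℕ} (hl : 1 ≤ l) (hlk : l ≤ k)
    (h : ∃ d : Deriv Δ (xiTarget l), d.normal ∧ d.IntrosVacuous) :
    ∃ d : Deriv Δ (xiTarget k), d.normal ∧ d.IntrosVacuous := by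
  induction k, hlk using Nat.le_induction with
  | base => exact h
  | succ j hlj ih =>
    obtain ⟨d, hd, hv⟩ := ih
    obtain ⟨d', hd', hv'⟩ : ∃ d' : Deriv (Δ + Multiset.replicate 0 (xiAnte j)) (xiTarget j),
        d'.normal ∧ d'.IntrosVacuous := by
      rw [Multiset.replicate_zero, add_zero]
      exact ⟨d, hd, hv⟩
    rw [xiTarget_succ (hl.trans hlj), xi_eq (hl.trans hlj)]
    exact ⟨.intro 0 d', hd', rfl, hv'⟩

/-- `Δ` arises from `Γ` by trading assumptions `ξ_k` for at most half as many `ξ_{k-1}`. -/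
def Halves (k : ℕ) (Γ Δ : Multiset Fm) : Prop :=
  (∀ x ∈ Δ, x ∈ Γ ∨ x = xiTarget k) ∧ xi k ∉ Δ ∧ 2 * Δ.count (xiTarget k) ≤ Γ.count (xi k)

namespace Halves

variable {k : ℕ} {Γ Γ' Δ Δ' : Multiset Fm}

theorem mono (h : Halves k Γ Δ) (hΓ : Γ ≤ Γ') (hΔ : Δ' ≤ Δ) : Halves k Γ' Δ' := by
  obtain ⟨hmem, hxi, hcount⟩ := h
  refine ⟨fun x hx => (hmem x (Multiset.mem_of_le hΔ hx)).imp_left (Multiset.mem_of_le hΓ),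
    fun hx => hxi (Multiset.mem_of_le hΔ hx), ?_⟩
  have := Multiset.count_le_of_le (xiTarget k) hΔ
  have := Multiset.count_le_of_le (xi k) hΓ
  omega

theorem add (h : Halves k Γ Δ) (h' : Halves k Γ' Δ') : Halves k (Γ + Γ') (Δ + Δ') := by
  obtain ⟨hmem, hxi, hcount⟩ := h
  obtain ⟨hmem', hxi', hcount'⟩ := h'
  refine ⟨fun x hx => ?_, fun hx => (Multiset.mem_add.mp hx).elim hxi hxi', ?_⟩
  · rcases Multiset.mem_add.mp hx with hx | hx
    · exact (hmem x hx).imp_left (Multiset.mem_add.mpr ∘ .inl)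
    · exact (hmem' x hx).imp_left (Multiset.mem_add.mpr ∘ .inr)
  · simp only [Multiset.count_add]
    omega

theorem filter_ne {n : ℕ} {a : Fm} (h : Halves k (Γ + Multiset.replicate n a) Δ)
    (ha : a ≠ xi k) : Halves k Γ (Δ.filter (· ≠ a)) := by
  obtain ⟨hmem, hxi, hcount⟩ := h
  refine ⟨fun x hx => ?_, fun hx => hxi (Multiset.mem_of_mem_filter hx), ?_⟩
  · obtain ⟨hx, hxa⟩ := Multiset.mem_filter.mp hx
    refine (hmem x hx).imp_left fun hx => ?_
    exact (Multiset.mem_add.mp hx).resolve_right fun h => hxa (Multiset.eq_of_mem_replicate h)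
  · have := Multiset.count_le_of_le (xiTarget k) (Multiset.filter_le (· ≠ a) Δ)
    simp only [Multiset.count_add, Multiset.count_replicate, ha, if_false] at hcount
    omega

theorem of_lowHyp (hk : 2 ≤ k) (h : ∀ x ∈ Δ, x ∈ Γ ∧ LowHyp k x) : Halves k Γ Δ := by
  refine ⟨fun x hx => .inl (h x hx).1, fun hx => (h _ hx).2.ne_xi (by omega) rfl, ?_⟩
  rw [Multiset.count_eq_zero.mpr fun hx => (h _ hx).2.ne_xiTarget hk rfl]
  exact Nat.zero_le _

theorem singleton_xiTarget (hk : 1 ≤ k) (h : 2 ≤ Γ.count (xi k)) :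
    Halves k Γ {xiTarget k} := by
  refine ⟨fun x hx => .inr (Multiset.mem_singleton.mp hx), fun hx => ?_, ?_⟩
  · exact xiTarget_ne_xi hk (Multiset.mem_singleton.mp hx).symm
  · rwa [Multiset.count_singleton_self]

theorem eq_replicate {n : ℕ} (h : Halves k (Multiset.replicate n (xi k)) Δ) :
    Δ = Multiset.replicate (Multiset.card Δ) (xiTarget k) ∧ 2 * Multiset.card Δ ≤ n := by
  obtain ⟨hmem, hxi, hcount⟩ := h
  have hΔ : Δ = Multiset.replicate (Multiset.card Δ) (xiTarget k) :=
    Multiset.eq_replicate_card.mpr fun x hx =>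
      (hmem x hx).resolve_left fun h => hxi (Multiset.eq_of_mem_replicate h ▸ hx)
  refine ⟨hΔ, ?_⟩
  rw [hΔ] at hcount
  simpa only [Multiset.count_replicate_self, Multiset.card_replicate] using hcount

end Halves

theorem exists_halves_of_elim_xi {k : ℕ} (hk : 2 ≤ k) {Γ₁ Γ₂ : Multiset Fm}
    (minor : Deriv Γ₁ (xiAnte k)) (hΓ₁ : ∀ x ∈ Γ₁, Admissible k x) (h₂ : xi k ∈ Γ₂) :
    ∃ (Δ : Multiset Fm) (d : Deriv Δ (xiTarget k)),
      d.normal ∧ d.IntrosVacuous ∧ Halves k (Γ₁ + Γ₂) Δ := by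
  by_cases h₁ : xi k ∈ Γ₁
  · refine ⟨{xiTarget k}, .assume _, trivial, trivial, .singleton_xiTarget (by omega) ?_⟩
    have := Multiset.count_pos.mpr h₁
    have := Multiset.count_pos.mpr h₂
    rw [Multiset.count_add]
    omega
  · have hlow : ∀ x ∈ Γ₁, LowHyp k x := fun x hx =>
      (hΓ₁ x hx).resolve_left fun h => h₁ (h ▸ hx)
    obtain ⟨l, hl, hlk, hD, hl'⟩ := exists_dImp_mem_of_deriv_xiAnte (by omega) hlow minor
    obtain ⟨Δ, hΔ, hder⟩ := exists_deriv_xiTarget hD hl'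
    obtain ⟨d, hd, hv⟩ := exists_deriv_xiTarget_of_le hl hlk.le hder
    have hH : Halves k Γ₁ Δ := .of_lowHyp hk fun x hx => ⟨hΔ x hx, hlow x (hΔ x hx)⟩
    exact ⟨Δ, d, hd, hv, hH.mono (Multiset.le_add_right _ _) le_rfl⟩

theorem Deriv.exists_halves {k : ℕ} (hk : 2 ≤ k) {Γ : Multiset Fm} {c : Fm} (d : Deriv Γ c)
    (hd : d.normal) (hΓ : ∀ x ∈ Γ, Admissible k x) (hc : LowGoal k c) :
    ∃ (Δ : Multiset Fm) (d' : Deriv Δ c),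
      d'.normal ∧ (¬ d.isIntro → d'.IntrosVacuous) ∧ Halves k Γ Δ := by
  induction d with
  | assume a =>
    have ha := (hΓ a (Multiset.mem_singleton_self a)).resolve_left (hc.ne_xi (by omega))
    refine ⟨{a}, .assume a, trivial, fun _ => trivial, .of_lowHyp hk fun x hx => ?_⟩
    rw [Multiset.mem_singleton.mp hx]
    exact ⟨Multiset.mem_singleton_self a, ha⟩
  | intro n body ih =>
    obtain ⟨ha, hb⟩ := hc.of_impl
    have hΓ' : ∀ x ∈ _ + Multiset.replicate n _, Admissible k x := fun x hx =>
      (Multiset.mem_add.mp hx).elim (hΓ x) fun hx => .inr (Multiset.eq_of_mem_replicate hx ▸ ha)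
    obtain ⟨Δ, d', hd', -, hΔ⟩ := ih hd hΓ' hb
    obtain ⟨d'', hd''⟩ := d'.exists_normal_intro hd' _
    exact ⟨_, d'', hd'', fun h => absurd trivial h, hΔ.filter_ne (ha.ne_xi (by omega))⟩
  | elim minor major ihm ihM =>
    rename_i Γ₁ Γ₂ a b
    obtain ⟨hm, hM, hMi⟩ := hd
    have hΓ₁ : ∀ x ∈ Γ₁, Admissible k x := fun x hx => hΓ x (Multiset.mem_add.mpr (.inl hx))
    have hΓ₂ : ∀ x ∈ Γ₂, Admissible k x := fun x hx => hΓ x (Multiset.mem_add.mpr (.inr hx))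
    obtain ⟨g, hg, hab⟩ := major.exists_isTail hM hMi
    rcases (hΓ₂ g hg).eq_xi_or_lowGoal_of_isTail (by omega) hab with ⟨hξ, rfl⟩ | hab
    · rw [xi_eq (by omega)] at hξ
      obtain ⟨rfl, rfl⟩ := Fm.impl.inj hξ
      obtain ⟨Δ, d, hd, hv, hΔ⟩ := exists_halves_of_elim_xi hk minor hΓ₁ hg
      exact ⟨Δ, d, hd, fun _ => hv, hΔ⟩
    · obtain ⟨Δ₁, d₁, hd₁, -, hΔ₁⟩ := ihm hm hΓ₁ hab.of_impl.1.lowGoal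
      obtain ⟨Δ₂, d₂, hd₂, hv₂, hΔ₂⟩ := ihM hM hΓ₂ hab
      obtain ⟨Δ, hΔ, d, hd, hv⟩ := d₁.exists_normal_elim d₂ hd₁ hd₂ (hv₂ hMi)
      exact ⟨Δ, d, hd, fun _ => hv, (hΔ₁.add hΔ₂).mono le_rfl hΔ⟩

/-- for k ≥ 2, if there is a normal proof of φ_k whose last rule
(an →-introduction) discharges fewer than 2^k occurrences of ξ_k, then there is
a normal proof of φ_{k-1} whose last rule discharges fewer than 2^(k-1)
occurrences of ξ_{k-1}. -/
theorem descend_small_proof (k : ℕ) (hk : 2 ≤ k)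
    (h : ∃ n : ℕ, n < 2 ^ k ∧
      ∃ d : Deriv ((0 : Multiset Fm) + Multiset.replicate n (xi k)) (.atom 0),
        (Deriv.intro n d : Deriv 0 (phi k)).normal) :
    ∃ m : ℕ, m < 2 ^ (k - 1) ∧
      ∃ d' : Deriv ((0 : Multiset Fm) + Multiset.replicate m (xi (k - 1))) (.atom 0),
        (Deriv.intro m d' : Deriv 0 (phi (k - 1))).normal := by
  obtain ⟨n, hn, d, hd⟩ := h
  have hΓ : ∀ x ∈ 0 + Multiset.replicate n (xi k), Admissible k x := fun x hx =>
    .inl (Multiset.eq_of_mem_replicate (by rwa [zero_add] at hx))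
  obtain ⟨Δ, d', hd', -, hΔ⟩ := d.exists_halves hk hd hΓ (.inl rfl)
  rw [zero_add] at hΔ
  obtain ⟨hΔ, hcard⟩ := hΔ.eq_replicate
  have hpow : 2 ^ k = 2 * 2 ^ (k - 1) := by rw [← pow_succ']; congr 1; omega
  refine ⟨Multiset.card Δ, by omega, ?_⟩
  show ∃ d' : Deriv (0 + Multiset.replicate _ (xi (k - 1))) (.atom 0), d'.normal
  rw [zero_add, ← xiTarget_succ (by omega : 1 ≤ k - 1), Nat.sub_add_cancel (by omega), ← hΔ]
  exact ⟨d', hd'⟩
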